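/- arXiv:math/0508505 — 3 statements merged into one kernel-verified Lean document; each statement's English description precedes it below -/
import Mathlib

section
/- Let P and Q be probability measures on a measurable space and let 0 < ε ≤ 1. Then the total variation distance satisfies d_tv(P,Q) ≤ ε if and only if there exist probability measures H₁ and H₂ such that Q − P = ε(H₁ − P) − ε(H₂ − P) (as signed measures). -/
open MeasureTheory

/-- For probability measures `P`, `Q` on a measurable space and `0 < ε ≤ 1`,
the total variation distance satisfies `d_tv(P,Q) ≤ ε` (i.e. `|P A − Q A| ≤ ε` for every
measurable `A`) if and only if there exist probability measures `H₁`, `H₂` with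
`Q − P = ε (H₁ − P) − ε (H₂ − P)` as signed measures (expressed setwise on real values). -/
theorem statement_0 {X : Type*} [MeasurableSpace X]
    (P Q : Measure X) [IsProbabilityMeasure P] [IsProbabilityMeasure Q]
    (ε : ℝ) (hε0 : 0 < ε) (hε1 : ε ≤ 1) :
    (∀ A : Set X, MeasurableSet A → |(P A).toReal - (Q A).toReal| ≤ ε) ↔
      ∃ (H₁ H₂ : Measure X), IsProbabilityMeasure H₁ ∧ IsProbabilityMeasure H₂ ∧
        ∀ A : Set X, MeasurableSet A →
          (Q A).toReal - (P A).toReal =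
            ε * ((H₁ A).toReal - (P A).toReal) - ε * ((H₂ A).toReal - (P A).toReal) := by
  constructor
  · intro h
    set s : SignedMeasure X := Q.toSignedMeasure - P.toSignedMeasure with hs
    set j := s.toJordanDecomposition with hj
    -- key pointwise identity
    have hkey : ∀ A : Set X, MeasurableSet A →
        (j.posPart A).toReal - (j.negPart A).toReal = (Q A).toReal - (P A).toReal := by
      intro A hA
      have h1 : j.toSignedMeasure = s := s.toSignedMeasure_toJordanDecomposition
      have h2 : j.toSignedMeasure A = (j.posPart A).toReal - (j.negPart A).toReal := by
        rw [JordanDecomposition.toSignedMeasure, Measure.toSignedMeasure_sub_apply hA]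
        rfl
      have h3 : s A = (Q A).toReal - (P A).toReal := by
        rw [hs, Measure.toSignedMeasure_sub_apply hA]
        rfl
      rw [← h2, h1, h3]
    set δ : ENNReal := j.posPart Set.univ with hδ
    have hδfin : δ ≠ ⊤ := measure_ne_top _ _
    have hνfin : j.negPart Set.univ ≠ ⊤ := measure_ne_top _ _
    -- masses of posPart and negPart are equal
    have hmass : (j.negPart Set.univ).toReal = δ.toReal := by
      have := hkey Set.univ MeasurableSet.univ
      simp [measure_univ] at this
      linarith
    -- δ.toReal ≤ ε, using the Hahn set
    obtain ⟨u, hu, hpu, hnu⟩ := j.mutuallySingular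
    have hposuc : j.posPart uᶜ = δ := by
      have := measure_add_measure_compl (μ := j.posPart) hu
      rw [hpu, zero_add] at this
      rw [this]
    have hδε : δ.toReal ≤ ε := by
      have hk := hkey uᶜ hu.compl
      rw [hposuc, hnu] at hk
      have habs := h uᶜ hu.compl
      rw [abs_sub_comm] at habs
      have : (Q uᶜ).toReal - (P uᶜ).toReal ≤ ε := (abs_le.mp habs).2
      simp at hk
      linarith
    set εe : ENNReal := ENNReal.ofReal ε with hεe
    have hεe0 : εe ≠ 0 := by
      simp [hεe, ENNReal.ofReal_eq_zero, not_le, hε0]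
    have hεefin : εe ≠ ⊤ := ENNReal.ofReal_ne_top
    have hδle : δ ≤ εe := by
      rw [hεe, ENNReal.le_ofReal_iff_toReal_le hδfin hε0.le]
      exact hδε
    set c : ENNReal := 1 - δ / εe with hc
    have hdiv_le : δ / εe ≤ 1 := ENNReal.div_le_of_le_mul (by simpa using hδle)
    have hdivfin : δ / εe ≠ ⊤ := by
      exact ne_top_of_le_ne_top ENNReal.one_ne_top hdiv_le
    have hcfin : c ≠ ⊤ := by
      exact ne_top_of_le_ne_top ENNReal.one_ne_top (by simp [hc])
    have hcval : c.toReal = 1 - δ.toReal / ε := by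
      rw [hc, ENNReal.toReal_sub_of_le hdiv_le ENNReal.one_ne_top, ENNReal.toReal_one,
        ENNReal.toReal_div, hεe, ENNReal.toReal_ofReal hε0.le]
    set H₁ : Measure X := εe⁻¹ • j.posPart + c • P with hH1
    set H₂ : Measure X := εe⁻¹ • j.negPart + c • P with hH2
    have hinvfin : εe⁻¹ ≠ ⊤ := by simpa using hεe0
    have hinvval : (εe⁻¹).toReal = ε⁻¹ := by
      rw [ENNReal.toReal_inv, hεe, ENNReal.toReal_ofReal hε0.le]
    have happly : ∀ (μ : Measure X) (A : Set X), μ Set.univ ≠ ⊤ → A ⊆ Set.univ →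
        ((εe⁻¹ • μ + c • P) A).toReal = ε⁻¹ * (μ A).toReal + c.toReal * (P A).toReal := by
      intro μ A hμ _
      have hμA : μ A ≠ ⊤ := ne_top_of_le_ne_top hμ (measure_mono (Set.subset_univ _))
      rw [Measure.add_apply, Measure.smul_apply, Measure.smul_apply, smul_eq_mul, smul_eq_mul,
        ENNReal.toReal_add (ENNReal.mul_ne_top hinvfin hμA)
          (ENNReal.mul_ne_top hcfin (measure_ne_top _ _)),
        ENNReal.toReal_mul, ENNReal.toReal_mul, hinvval]
    have hprob : ∀ (μ : Measure X), μ Set.univ = δ → IsProbabilityMeasure (εe⁻¹ • μ + c • P) := by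
      intro μ hμ
      constructor
      rw [Measure.add_apply, Measure.smul_apply, Measure.smul_apply, smul_eq_mul, smul_eq_mul,
        hμ, measure_univ, mul_one, hc]
      rw [← ENNReal.div_eq_inv_mul, add_tsub_cancel_of_le hdiv_le]
    have hnegmass : j.negPart Set.univ = δ := by
      have := (ENNReal.toReal_eq_toReal_iff' hνfin hδfin).mp hmass
      exact this
    refine ⟨H₁, H₂, hprob _ rfl, hprob _ hnegmass, ?_⟩
    intro A hA
    have e1 := happly j.posPart A (measure_ne_top _ _) (Set.subset_univ _)
    have e2 := happly j.negPart A (measure_ne_top _ _) (Set.subset_univ _)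
    rw [hH1, hH2, e1, e2]
    have hk := hkey A hA
    have hinv : ε * ε⁻¹ = 1 := mul_inv_cancel₀ hε0.ne'
    have expand : ε * (ε⁻¹ * (j.posPart A).toReal + c.toReal * (P A).toReal - (P A).toReal) -
        ε * (ε⁻¹ * (j.negPart A).toReal + c.toReal * (P A).toReal - (P A).toReal)
        = (ε * ε⁻¹) * ((j.posPart A).toReal - (j.negPart A).toReal) := by ring
    rw [expand, hinv, one_mul, hk]
  · rintro ⟨H₁, H₂, h1, h2, heq⟩ A hA
    have hq := heq A hA
    have b1 : (H₁ A).toReal ≤ 1 := by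
      rw [← ENNReal.toReal_one]
      exact ENNReal.toReal_mono ENNReal.one_ne_top prob_le_one
    have b2 : (H₂ A).toReal ≤ 1 := by
      rw [← ENNReal.toReal_one]
      exact ENNReal.toReal_mono ENNReal.one_ne_top prob_le_one
    have p1 : 0 ≤ (H₁ A).toReal := ENNReal.toReal_nonneg
    have p2 : 0 ≤ (H₂ A).toReal := ENNReal.toReal_nonneg
    rw [abs_le]
    constructor <;> nlinarith
end

section
/- Let x₁ < x₂ < ... < xₙ be real numbers with minimum gap δ₀ = min_i (x_{i+1} − x_i), and let x₁*, ..., xₙ* satisfy |x_i* − x_i| < δ₀/2 for all i with x_i* ≠ x_i for at least one i. Then the Kolmogorov distance between the empirical measures Pₙ of (x_i) and Pₙ* of (x_i*) equals 1/n. -/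
/-!
The two empirical distribution functions at `t` differ by `1/n` times the signed number of
indices `i` for which exactly one of `xᵢ`, `x*ᵢ` lies in `(-∞, t]`. For such an `i` the point `t`
lies between `xᵢ` and `x*ᵢ`, hence within `δ₀/2` of `xᵢ`; two such indices would put two of the
`δ₀`-separated points within `δ₀` of each other. So at most one index disagrees at any `t`,
and at `t = min xᵢ x*ᵢ` for a moved point `i` exactly one does.
-/

open Finset

section Counting

variable {ι : Type*} [Fintype ι] (p q : ι → Prop) [DecidablePred p] [DecidablePred q]

theorem card_filter_sub_card_filter_eq_sum :
    (#(univ.filter p) : ℝ) - #(univ.filter q) =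
      ∑ i ∈ univ.filter (fun i => ¬(p i ↔ q i)), if p i then 1 else -1 := by
  rw [natCast_card_filter, natCast_card_filter, ← sum_sub_distrib, sum_filter]
  refine sum_congr rfl fun i _ => ?_
  by_cases hp : p i <;> by_cases hq : q i <;> simp [hp, hq]

theorem abs_card_filter_sub_card_filter_le :
    |(#(univ.filter p) : ℝ) - #(univ.filter q)| ≤ #(univ.filter fun i => ¬(p i ↔ q i)) := by
  rw [card_filter_sub_card_filter_eq_sum, card_eq_sum_ones, Nat.cast_sum]
  refine (abs_sum_le_sum_abs _ _).trans (sum_le_sum fun i _ => ?_)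
  split_ifs <;> simp

theorem abs_card_filter_sub_card_filter_eq_one {i₀ : ι}
    (h : univ.filter (fun i => ¬(p i ↔ q i)) = {i₀}) :
    |(#(univ.filter p) : ℝ) - #(univ.filter q)| = 1 := by
  rw [card_filter_sub_card_filter_eq_sum, h, sum_singleton]
  split_ifs <;> simp

end Counting

theorem abs_sub_le_abs_sub_of_not_le_iff_le {a b t : ℝ} (h : ¬(a ≤ t ↔ b ≤ t)) :
    |t - a| ≤ |b - a| := by
  by_cases ha : a ≤ t
  · have hb : t < b := not_le.mp fun hb => h (iff_of_true ha hb)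
    rw [abs_of_nonneg (sub_nonneg.mpr ha), abs_of_pos (by linarith)]
    linarith
  · have hb : b ≤ t := not_not.mp fun hb => h (iff_of_false ha hb)
    rw [abs_of_neg (by linarith), abs_of_neg (by linarith)]
    linarith

theorem not_le_min_iff_le_min {a b : ℝ} (h : a ≠ b) : ¬(a ≤ min a b ↔ b ≤ min a b) := by
  rcases h.lt_or_gt with h | h <;> simp [h.le, h]

section Separated

variable {ι : Type*} {x y : ι → ℝ} {δ : ℝ}

theorem eq_of_not_le_iff_le_of_pairwise_le_abs_sub (hsep : Pairwise fun i j => δ ≤ |x i - x j|)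
    (hclose : ∀ i, |y i - x i| < δ / 2) {t : ℝ} {i j : ι}
    (hi : ¬(x i ≤ t ↔ y i ≤ t)) (hj : ¬(x j ≤ t ↔ y j ≤ t)) : i = j := by
  by_contra hij
  have hti := (abs_sub_le_abs_sub_of_not_le_iff_le hi).trans_lt (hclose i)
  have htj := (abs_sub_le_abs_sub_of_not_le_iff_le hj).trans_lt (hclose j)
  have := (hsep hij).trans (abs_sub_le (x i) t (x j))
  rw [abs_sub_comm (x i)] at this
  linarith

theorem card_filter_not_le_iff_le_le_one [Fintype ι]
    (hsep : Pairwise fun i j => δ ≤ |x i - x j|) (hclose : ∀ i, |y i - x i| < δ / 2) (t : ℝ) :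
    #(univ.filter fun i => ¬(x i ≤ t ↔ y i ≤ t)) ≤ 1 :=
  card_le_one.mpr fun _ hi _ hj => eq_of_not_le_iff_le_of_pairwise_le_abs_sub hsep hclose
    (mem_filter.mp hi).2 (mem_filter.mp hj).2

theorem filter_not_le_iff_le_min_eq_singleton [Fintype ι]
    (hsep : Pairwise fun i j => δ ≤ |x i - x j|) (hclose : ∀ i, |y i - x i| < δ / 2)
    {i₀ : ι} (hi₀ : x i₀ ≠ y i₀) :
    univ.filter (fun i => ¬(x i ≤ min (x i₀) (y i₀) ↔ y i ≤ min (x i₀) (y i₀))) = {i₀} := by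
  have hi₀mem := not_le_min_iff_le_min hi₀
  refine eq_singleton_iff_unique_mem.mpr ⟨mem_filter.mpr ⟨mem_univ _, hi₀mem⟩, fun j hj => ?_⟩
  exact eq_of_not_le_iff_le_of_pairwise_le_abs_sub hsep hclose (mem_filter.mp hj).2 hi₀mem

end Separated

theorem pairwise_le_abs_sub_of_monotone {n : ℕ} {x : Fin n → ℝ} {δ : ℝ} (hmono : Monotone x)
    (hgap : ∀ i j : Fin n, (i : ℕ) + 1 = j → δ ≤ x j - x i) :
    Pairwise fun i j => δ ≤ |x i - x j| := by
  have hlt : ∀ i j : Fin n, i < j → δ ≤ x j - x i := fun i j hij => by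
    have hsucc : (i : ℕ) + 1 < n := lt_of_le_of_lt hij j.isLt
    have := hmono (show (⟨(i : ℕ) + 1, hsucc⟩ : Fin n) ≤ j from hij)
    linarith [hgap i ⟨(i : ℕ) + 1, hsucc⟩ rfl]
  intro i j hij
  rcases hij.lt_or_gt with h | h
  · exact (hlt i j h).trans (abs_sub_comm (x i) _ ▸ le_abs_self _)
  · exact (hlt j i h).trans (le_abs_self _)

theorem statement_1_general (n : ℕ) (x xs : Fin n → ℝ) (δ₀ : ℝ)
    (hmono : StrictMono x)
    (hgap : ∀ i j : Fin n, (i : ℕ) + 1 = j → δ₀ ≤ x j - x i)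
    (hclose : ∀ i, |xs i - x i| < δ₀ / 2)
    (hmoved : ∃ i, xs i ≠ x i) :
    (⨆ t : ℝ,
        |((univ.filter fun i => x i ≤ t).card : ℝ) / n -
          ((univ.filter fun i => xs i ≤ t).card : ℝ) / n|) = 1 / n := by
  have hsep := pairwise_le_abs_sub_of_monotone hmono.monotone hgap
  obtain ⟨i₀, hi₀⟩ := hmoved
  simp_rw [div_sub_div_same, abs_div, Nat.abs_cast]
  refine ciSup_eq_of_forall_le_of_forall_lt_exists_gt (fun t => ?_)
    fun w hw => ⟨min (x i₀) (xs i₀), hw.trans_eq ?_⟩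
  · gcongr
    exact (abs_card_filter_sub_card_filter_le _ _).trans
      (mod_cast card_filter_not_le_iff_le_le_one hsep hclose t)
  · rw [abs_card_filter_sub_card_filter_eq_one _ _
      (filter_not_le_iff_le_min_eq_singleton hsep hclose hi₀.symm)]

/-- If `x₁ < ⋯ < xₙ` have all gaps at least `δ₀ > 0`, and the perturbed points
`x*` satisfy `|x*ᵢ − xᵢ| < δ₀/2` with at least one point actually altered, then the
Kolmogorov distance between the two empirical measures equals `1/n`. -/
theorem statement_1 (n : ℕ) (hn : 0 < n) (x xs : Fin n → ℝ) (δ₀ : ℝ) (hδ₀ : 0 < δ₀)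
    (hmono : StrictMono x)
    (hgap : ∀ i j : Fin n, (i : ℕ) + 1 = j → δ₀ ≤ x j - x i)
    (hclose : ∀ i, |xs i - x i| < δ₀ / 2)
    (hmoved : ∃ i, xs i ≠ x i) :
    (⨆ t : ℝ,
        |((univ.filter fun i => x i ≤ t).card : ℝ) / n -
          ((univ.filter fun i => xs i ≤ t).card : ℝ) / n|) = 1 / n :=
  statement_1_general n x xs δ₀ hmono hgap hclose hmoved
end

section
/- For every natural number m there exists a finite set S ⊂ ℝ² with |S| = m that is shattered by the class of monotone tubes, i.e., for every subset A ⊆ S there is a monotone tube C with C ∩ S = A. Hence the class of monotone tubes is not a Vapnik–Chervonenkis class. -/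
/-!
Put the points on the line `y = 2x`. For a 1-Lipschitz `g`, the function `h x = g x - 2x` is
strictly decreasing, and the degenerate tube `h x + y = 0` meets the line exactly where `g`
vanishes. Taking for `g` the distance to a closed set of abscissae (a constant if that set is
empty) therefore cuts out any prescribed finite subset of points on the line.
-/

/-- A monotone tube `{(x,y) : −δ ≤ h(x) + y ≤ δ}` with `h` strictly monotone, `δ ≥ 0`. -/
def IsMonotoneTube (C : Set (ℝ × ℝ)) : Prop :=
  ∃ (h : ℝ → ℝ) (δ : ℝ), (StrictMono h ∨ StrictAnti h) ∧ 0 ≤ δ ∧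
    C = {p : ℝ × ℝ | -δ ≤ h p.1 + p.2 ∧ h p.1 + p.2 ≤ δ}

open Metric

lemma strictAnti_sub_mul_of_lipschitzWith {g : ℝ → ℝ} {K : NNReal} {c : ℝ}
    (hg : LipschitzWith K g) (hKc : (K : ℝ) < c) : StrictAnti fun x => g x - c * x := by
  intro x y hxy
  have hdist : g y - g x ≤ K * (y - x) := by
    calc g y - g x ≤ dist (g y) (g x) := le_abs_self _
      _ ≤ K * dist y x := hg.dist_le_mul y x
      _ = K * (y - x) := by rw [Real.dist_eq, abs_of_pos (sub_pos.mpr hxy)]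
  nlinarith

lemma exists_lipschitzWith_one_eq_zero_iff {X : Type*} [PseudoMetricSpace X] {F : Set X}
    (hF : IsClosed F) : ∃ g : X → ℝ, LipschitzWith 1 g ∧ ∀ x, g x = 0 ↔ x ∈ F := by
  rcases F.eq_empty_or_nonempty with rfl | hne
  · exact ⟨fun _ => 1, LipschitzWith.const' 1, fun x => by simp⟩
  · refine ⟨fun x => infDist x F, lipschitz_infDist_pt F, fun x => ?_⟩
    rw [← mem_closure_iff_infDist_zero hne, hF.closure_eq]

lemma exists_isMonotoneTube_mem_iff {F : Set ℝ} (hF : IsClosed F) :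
    ∃ C : Set (ℝ × ℝ), IsMonotoneTube C ∧ ∀ x, (x, 2 * x) ∈ C ↔ x ∈ F := by
  obtain ⟨g, hg, hgF⟩ := exists_lipschitzWith_one_eq_zero_iff hF
  refine ⟨_, ⟨fun x => g x - 2 * x, 0,
    Or.inr (strictAnti_sub_mul_of_lipschitzWith hg (by norm_num)), le_rfl, rfl⟩, fun x => ?_⟩
  simp only [Set.mem_ofPred_eq, sub_add_cancel, neg_zero, ← hgF, le_antisymm_iff, and_comm]

lemma exists_isMonotoneTube_inter_eq {S A : Set (ℝ × ℝ)} (hS : ∀ p ∈ S, p.2 = 2 * p.1)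
    (hAS : A ⊆ S) (hA : IsClosed A) : ∃ C : Set (ℝ × ℝ), IsMonotoneTube C ∧ C ∩ S = A := by
  obtain ⟨C, hC, hCA⟩ := exists_isMonotoneTube_mem_iff
    (hA.preimage (continuous_id.prodMk (continuous_const.mul continuous_id)))
  have hpoint : ∀ p ∈ S, p = (p.1, 2 * p.1) := fun p hp => Prod.ext rfl (hS p hp)
  refine ⟨C, hC, Set.ext fun p => ⟨fun ⟨hpC, hpS⟩ => ?_, fun hpA => ⟨?_, hAS hpA⟩⟩⟩
  · rw [hpoint p hpS] at hpC ⊢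
    exact (hCA p.1).mp hpC
  · have hpS := hAS hpA
    rw [hpoint p hpS] at hpA ⊢
    exact (hCA p.1).mpr hpA

/-- For every `m` there is a set of `m` points in `ℝ²` shattered by the
class of monotone tubes; hence the monotone tubes do not form a VC class. -/
theorem statement_15 (m : ℕ) :
    ∃ S : Finset (ℝ × ℝ), S.card = m ∧
      ∀ A : Finset (ℝ × ℝ), A ⊆ S →
        ∃ C : Set (ℝ × ℝ), IsMonotoneTube C ∧ C ∩ (S : Set (ℝ × ℝ)) = (A : Set (ℝ × ℝ)) := by
  have hinj : Function.Injective fun i : ℕ => ((i : ℝ), 2 * (i : ℝ)) :=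
    fun i j hij => Nat.cast_injective (congrArg Prod.fst hij)
  refine ⟨(Finset.range m).image fun i : ℕ => ((i : ℝ), 2 * (i : ℝ)), ?_, fun A hA => ?_⟩
  · rw [Finset.card_image_of_injective _ hinj, Finset.card_range]
  · refine exists_isMonotoneTube_inter_eq (fun p hp => ?_) (Finset.coe_subset.mpr hA) A.isClosed
    obtain ⟨i, -, rfl⟩ := Finset.mem_image.mp hp
    rfl
end
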